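/- Let R = (R₁,R₂) : ℝ → ℝ² be continuously differentiable with R(0) = 0, |R'(0)| ≤ 1, and R' Lipschitz continuous with constant L. Then for every t ≥ 0, |Area(R)|₀^t| ≤ (L/2) t³ + (L²/8) t⁴; in particular Area(R)|₀^t = O(t³) as t → 0⁺. -/
import Mathlib


open MeasureTheory

noncomputable section

/-- The area swept by the planar curve `R = (R₁, R₂)` on `[a, b]`:
`Area(R)|_a^b = ½ ∫_a^b (R₂' R₁ − R₁' R₂)`. -/
def sweptArea (R₁ R₂ : ℝ → ℝ) (a b : ℝ) : ℝ :=
  (1 / 2) * ∫ s in a..b, (deriv R₂ s * R₁ s - deriv R₁ s * R₂ s)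

/-- The excess swept by the planar curve `R = (R₁, R₂)` on `[0, t]`:
`Exc(R)|₀^t = Σ_{ℓ,m} ∫₀^t (∫₀^s |ξ R_ℓ'(ξ)| dξ) |R_m'(s)| ds`. -/
def excess (R₁ R₂ : ℝ → ℝ) (t : ℝ) : ℝ :=
  ∑ l : Fin 2, ∑ m : Fin 2,
    ∫ s in (0:ℝ)..t,
      (∫ ξ in (0:ℝ)..s, |ξ * deriv (![R₁, R₂] l) ξ|) * |deriv (![R₁, R₂] m) s|

open intervalIntegral in
private lemma aux_taylor (g : ℝ → ℝ) (L : NNReal) (hg : Differentiable ℝ g)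
    (hc : Continuous (deriv g)) (h0 : g 0 = 0) (hL : LipschitzWith L (deriv g))
    {s : ℝ} (hs : 0 ≤ s) :
    |g s - deriv g 0 * s| ≤ (L : ℝ) * s ^ 2 / 2 := by
  have hftc : g s = ∫ ξ in (0:ℝ)..s, deriv g ξ := by
    rw [intervalIntegral.integral_deriv_eq_sub (fun x _ => hg x)
      (hc.intervalIntegrable 0 s), h0, sub_zero]
  have h2 : deriv g 0 * s = ∫ ξ in (0:ℝ)..s, deriv g 0 := by
    simp [mul_comm]
  rw [hftc, h2, ← intervalIntegral.integral_sub (hc.intervalIntegrable 0 s)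
    intervalIntegrable_const]
  calc |∫ ξ in (0:ℝ)..s, (deriv g ξ - deriv g 0)|
      ≤ ∫ ξ in (0:ℝ)..s, |deriv g ξ - deriv g 0| :=
        intervalIntegral.abs_integral_le_integral_abs hs
    _ ≤ ∫ ξ in (0:ℝ)..s, (L : ℝ) * ξ := by
        apply intervalIntegral.integral_mono_on hs
        · exact ((hc.sub continuous_const).abs).intervalIntegrable 0 s
        · exact (continuous_const.mul continuous_id).intervalIntegrable 0 s
        · intro ξ hξ
          have := hL.dist_le_mul ξ 0
          simp only [Real.dist_eq, sub_zero] at this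
          rwa [abs_of_nonneg hξ.1] at this
    _ = (L : ℝ) * s ^ 2 / 2 := by
        rw [intervalIntegral.integral_const_mul, integral_id]; ring

set_option maxHeartbeats 1000000 in
/-- **Rough estimate on the swept area.** If `R = (R₁, R₂)` is continuously differentiable
with `R(0) = 0`, `|R'(0)| ≤ 1`, and `R'` Lipschitz of constant `L` (componentwise), then
`|Area(R)|₀^t| ≤ (L/2) t³ + (L²/8) t⁴` for every `t ≥ 0`; in particular
`Area(R)|₀^t = O(t³)` as `t → 0⁺`. -/
theorem sweptArea_cubic_bound (R₁ R₂ : ℝ → ℝ) (L : NNReal)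
    (hR₁ : Differentiable ℝ R₁) (hR₂ : Differentiable ℝ R₂)
    (hc₁ : Continuous (deriv R₁)) (hc₂ : Continuous (deriv R₂))
    (h0₁ : R₁ 0 = 0) (h0₂ : R₂ 0 = 0)
    (hinit : (deriv R₁ 0) ^ 2 + (deriv R₂ 0) ^ 2 ≤ 1)
    (hL₁ : LipschitzWith L (deriv R₁)) (hL₂ : LipschitzWith L (deriv R₂)) :
    ∀ t : ℝ, 0 ≤ t →
      |sweptArea R₁ R₂ 0 t| ≤ (L / 2) * t ^ 3 + ((L : ℝ) ^ 2 / 8) * t ^ 4 := by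
  intro t ht
  set a₁ := deriv R₁ 0 with ha₁def
  set a₂ := deriv R₂ 0 with ha₂def
  have ha₁ : |a₁| ≤ 1 := by
    rw [← sq_le_one_iff_abs_le_one]; nlinarith [sq_nonneg a₂]
  have ha₂ : |a₂| ≤ 1 := by
    rw [← sq_le_one_iff_abs_le_one]; nlinarith [sq_nonneg a₁]
  have hLnn : (0:ℝ) ≤ L := L.coe_nonneg
  -- pointwise bound on the integrand
  have hpt : ∀ s ∈ Set.Icc (0:ℝ) t,
      |deriv R₂ s * R₁ s - deriv R₁ s * R₂ s|
        ≤ 3 * L * s ^ 2 + (L : ℝ) ^ 2 * s ^ 3 := by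
    intro s hs
    obtain ⟨hs0, _⟩ := hs
    have hT₁ := aux_taylor R₁ L hR₁ hc₁ h0₁ hL₁ hs0
    have hT₂ := aux_taylor R₂ L hR₂ hc₂ h0₂ hL₂ hs0
    have hd₁ : |deriv R₁ s - a₁| ≤ (L : ℝ) * s := by
      have := hL₁.dist_le_mul s 0
      simp only [Real.dist_eq, sub_zero] at this
      rwa [abs_of_nonneg hs0] at this
    have hd₂ : |deriv R₂ s - a₂| ≤ (L : ℝ) * s := by
      have := hL₂.dist_le_mul s 0
      simp only [Real.dist_eq, sub_zero] at this
      rwa [abs_of_nonneg hs0] at this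
    have hr₁ : |R₁ s| ≤ s + (L : ℝ) * s ^ 2 / 2 := by
      calc |R₁ s| = |(R₁ s - a₁ * s) + a₁ * s| := by ring_nf
        _ ≤ |R₁ s - a₁ * s| + |a₁ * s| := abs_add_le _ _
        _ ≤ (L : ℝ) * s ^ 2 / 2 + 1 * s := by
            rw [abs_mul, abs_of_nonneg hs0]
            exact add_le_add hT₁ (by nlinarith)
        _ = s + (L : ℝ) * s ^ 2 / 2 := by ring
    have hr₂ : |R₂ s| ≤ s + (L : ℝ) * s ^ 2 / 2 := by
      calc |R₂ s| = |(R₂ s - a₂ * s) + a₂ * s| := by ring_nf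
        _ ≤ |R₂ s - a₂ * s| + |a₂ * s| := abs_add_le _ _
        _ ≤ (L : ℝ) * s ^ 2 / 2 + 1 * s := by
            rw [abs_mul, abs_of_nonneg hs0]
            exact add_le_add hT₂ (by nlinarith)
        _ = s + (L : ℝ) * s ^ 2 / 2 := by ring
    have hA : |(deriv R₂ s - a₂) * R₁ s| ≤ (L : ℝ) * s * (s + (L : ℝ) * s ^ 2 / 2) := by
      rw [abs_mul]
      exact mul_le_mul hd₂ hr₁ (abs_nonneg _) (by positivity)
    have hB : |(deriv R₁ s - a₁) * R₂ s| ≤ (L : ℝ) * s * (s + (L : ℝ) * s ^ 2 / 2) := by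
      rw [abs_mul]
      exact mul_le_mul hd₁ hr₂ (abs_nonneg _) (by positivity)
    have hC : |a₂ * (R₁ s - a₁ * s)| ≤ 1 * ((L : ℝ) * s ^ 2 / 2) := by
      rw [abs_mul]
      exact mul_le_mul ha₂ hT₁ (abs_nonneg _) zero_le_one
    have hD : |a₁ * (R₂ s - a₂ * s)| ≤ 1 * ((L : ℝ) * s ^ 2 / 2) := by
      rw [abs_mul]
      exact mul_le_mul ha₁ hT₂ (abs_nonneg _) zero_le_one
    have hid : deriv R₂ s * R₁ s - deriv R₁ s * R₂ s
        = (deriv R₂ s - a₂) * R₁ s - (deriv R₁ s - a₁) * R₂ s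
          + a₂ * (R₁ s - a₁ * s) - a₁ * (R₂ s - a₂ * s) := by ring
    rw [hid]
    have h1 := abs_le.mp hA
    have h2 := abs_le.mp hB
    have h3 := abs_le.mp hC
    have h4 := abs_le.mp hD
    have hsum : (L : ℝ) * s * (s + (L : ℝ) * s ^ 2 / 2)
        + (L : ℝ) * s * (s + (L : ℝ) * s ^ 2 / 2)
        + 1 * ((L : ℝ) * s ^ 2 / 2) + 1 * ((L : ℝ) * s ^ 2 / 2)
        = 3 * L * s ^ 2 + (L : ℝ) ^ 2 * s ^ 3 := by ring
    rw [abs_le]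
    constructor <;> linarith [h1.1, h1.2, h2.1, h2.2, h3.1, h3.2, h4.1, h4.2]
  -- integrate
  have hcontf : Continuous (fun s => deriv R₂ s * R₁ s - deriv R₁ s * R₂ s) :=
    (hc₂.mul hR₁.continuous).sub (hc₁.mul hR₂.continuous)
  have hint : |∫ s in (0:ℝ)..t, (deriv R₂ s * R₁ s - deriv R₁ s * R₂ s)|
      ≤ ∫ s in (0:ℝ)..t, (3 * L * s ^ 2 + (L : ℝ) ^ 2 * s ^ 3) := by
    calc |∫ s in (0:ℝ)..t, (deriv R₂ s * R₁ s - deriv R₁ s * R₂ s)|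
        ≤ ∫ s in (0:ℝ)..t, |deriv R₂ s * R₁ s - deriv R₁ s * R₂ s| :=
          intervalIntegral.abs_integral_le_integral_abs ht
      _ ≤ ∫ s in (0:ℝ)..t, (3 * L * s ^ 2 + (L : ℝ) ^ 2 * s ^ 3) := by
          apply intervalIntegral.integral_mono_on ht
          · exact hcontf.abs.intervalIntegrable 0 t
          · exact (by continuity : Continuous fun s : ℝ =>
              3 * (L:ℝ) * s ^ 2 + (L : ℝ) ^ 2 * s ^ 3).intervalIntegrable 0 t
          · exact hpt
  have hval : (∫ s in (0:ℝ)..t, (3 * (L:ℝ) * s ^ 2 + (L : ℝ) ^ 2 * s ^ 3))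
      = (L : ℝ) * t ^ 3 + (L : ℝ) ^ 2 * t ^ 4 / 4 := by
    rw [intervalIntegral.integral_add
      ((by continuity : Continuous fun s : ℝ => 3 * (L:ℝ) * s ^ 2).intervalIntegrable 0 t)
      ((by continuity : Continuous fun s : ℝ => (L:ℝ) ^ 2 * s ^ 3).intervalIntegrable 0 t),
      intervalIntegral.integral_const_mul, intervalIntegral.integral_const_mul,
      integral_pow, integral_pow]
    norm_num; ring
  rw [sweptArea, abs_mul]
  calc |1 / 2| * |∫ s in (0:ℝ)..t, (deriv R₂ s * R₁ s - deriv R₁ s * R₂ s)|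
      ≤ 1 / 2 * ((L : ℝ) * t ^ 3 + (L : ℝ) ^ 2 * t ^ 4 / 4) := by
        rw [abs_of_pos (by norm_num : (0:ℝ) < 1/2)]
        have := hint.trans (le_of_eq hval)
        nlinarith [abs_nonneg (∫ s in (0:ℝ)..t, (deriv R₂ s * R₁ s - deriv R₁ s * R₂ s))]
    _ = (L / 2) * t ^ 3 + ((L : ℝ) ^ 2 / 8) * t ^ 4 := by ring

end
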